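/- Let V = ⟨V_a⟩ be an open complete Souslin scheme on a topological space (X,τ) that covers X, and let f be a selector on V such that p →_{V,τ} x for all x ∈ X and all p ∈ f⁻¹(x). Then the standard Lusin scheme S is a Lusin π-base for the space (ω^ω, σ_{τ,f}). -/

import Mathlib

open Set Topology

universe u v

/-- The restriction `p↾n` of `p : ℕ → ℕ`, as a finite sequence in `ω^{<ω}`. -/
def pre (p : ℕ → ℕ) (n : ℕ) : List ℕ := List.ofFn fun i : Fin n => p i

/-- `a ⊑ p` : the finite sequence `a` is an initial segment of the branch `p`. -/
def IsPre (a : List ℕ) (p : ℕ → ℕ) : Prop := a = pre p a.length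

/-- `S_a = {p ∈ ω^ω : a ⊑ p}`, the pieces of the standard Lusin scheme. -/
def stdS (a : List ℕ) : Set (ℕ → ℕ) := {p | IsPre a p}

section scheme

variable {X Y : Type*}

/-- `fruit_p(V) = ⋂_n V_{p↾n}`. -/
def fruit (V : List ℕ → Set X) (p : ℕ → ℕ) : Set X := ⋂ n, V (pre p n)

/-- `flesh(V) = ⋃_a V_a`. -/
def flesh (V : List ℕ → Set X) : Set X := ⋃ a, V a

/-- The Souslin scheme `V` covers the set `A`. -/
def Covers (V : List ℕ → Set X) (A : Set X) : Prop :=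
  V [] = A ∧ ∀ a, V a = ⋃ n, V (a ++ [n])

/-- The Souslin scheme `V` partitions the set `A`. -/
def Partitions (V : List ℕ → Set X) (A : Set X) : Prop :=
  Covers V A ∧ ∀ a, ∀ n m : ℕ, n ≠ m → V (a ++ [n]) ∩ V (a ++ [m]) = ∅

/-- `V` is complete: every fruit is nonempty. -/
def CompleteScheme (V : List ℕ → Set X) : Prop := ∀ q : ℕ → ℕ, (fruit V q).Nonempty

/-- `V` has strict branches: every fruit is a singleton. -/
def StrictBranches (V : List ℕ → Set X) : Prop := ∀ q : ℕ → ℕ, ∃ x, fruit V q = {x}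

/-- `V` is regular: `V_{a⌢n} ⊆ V_a`. -/
def RegularScheme (V : List ℕ → Set X) : Prop := ∀ a n, V (a ++ [n]) ⊆ V a

/-- `V` has nonempty leaves. -/
def NonemptyLeaves (V : List ℕ → Set X) : Prop := ∀ a, (V a).Nonempty

/-- `V` is an open Souslin scheme with respect to the topology `t`. -/
def OpenScheme (t : TopologicalSpace X) (V : List ℕ → Set X) : Prop := ∀ a, t.IsOpen (V a)

/-- `V` is semi-open with respect to the topology `t`: `V_a ⊆ Cl_t(Int_t(V_a))`. -/
def SemiOpenScheme (t : TopologicalSpace X) (V : List ℕ → Set X) : Prop :=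
  ∀ a, V a ⊆ @closure _ t (@interior _ t (V a))

/-- `Ṽ^k_b = ⋃_{j ≥ k} V_{b⌢j}`. -/
def shootSet (V : List ℕ → Set X) (b : List ℕ) (k : ℕ) : Set X :=
  ⋃ j, ⋃ (_ : k ≤ j), V (b ++ [j])

/-- `shoot_b(V) = {Ṽ^k_b : k ∈ ω}`. -/
def shoot (V : List ℕ → Set X) (b : List ℕ) : Set (Set X) := {G | ∃ k, G = shootSet V b k}

/-- `γ → U`: some member of the family `γ` is contained in `U`. -/
def Engulfs (γ : Set (Set X)) (U : Set X) : Prop := ∃ G ∈ γ, G ⊆ U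

/-- `p →_V U`: there is an infinite `L ⊆ ω` with `shoot_{p↾n}(V) → U` for all `n ∈ L`. -/
def ArrowSeq (V : List ℕ → Set X) (p : ℕ → ℕ) (U : Set X) : Prop :=
  ∃ L : Set ℕ, L.Infinite ∧ ∀ n ∈ L, Engulfs (shoot V (pre p n)) U

/-- `p →_{V,t} x`: `p →_V U` for every `t`-open `U` containing `x`. -/
def ArrowPt (t : TopologicalSpace X) (V : List ℕ → Set X) (p : ℕ → ℕ) (x : X) : Prop :=
  ∀ U : Set X, t.IsOpen U → x ∈ U → ArrowSeq V p U

/-- `V` is a Lusin π-base for `(X, t)`. -/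
def LusinPiBase (t : TopologicalSpace X) (V : List ℕ → Set X) : Prop :=
  OpenScheme t V ∧ Partitions V Set.univ ∧ StrictBranches V ∧
    ∀ x : X, ∀ U : Set X, t.IsOpen U → x ∈ U →
      ∃ a : List ℕ, ∃ n : ℕ, x ∈ V a ∧ shootSet V a n ⊆ U

/-- `V` is an α-scheme for `(X, t)`. -/
def AlphaScheme (t : TopologicalSpace X) (V : List ℕ → Set X) : Prop :=
  OpenScheme t V ∧ CompleteScheme V ∧ Covers V Set.univ ∧
    (∀ a : List ℕ, ∀ x ∈ V a, ∃ p : ℕ → ℕ, IsPre a p ∧ x ∈ fruit V p ∧ ArrowPt t V p x) ∧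
    (∀ p : ℕ → ℕ, ∃ x ∈ fruit V p, ArrowPt t V p x)

/-- `V` is a ramose α-scheme for `(X, t)`. -/
def RamoseAlphaScheme (t : TopologicalSpace X) (V : List ℕ → Set X) : Prop :=
  AlphaScheme t V ∧ ∀ a : List ℕ, ∀ x ∈ V a,
    Cardinal.mk {p : ℕ → ℕ // IsPre a p ∧ x ∈ fruit V p ∧ ArrowPt t V p x} = Cardinal.continuum

/-- `γ` is a π-base for `(X, t)`. -/
def PiBase (t : TopologicalSpace X) (γ : Set (Set X)) : Prop :=
  (∀ G ∈ γ, G.Nonempty ∧ t.IsOpen G) ∧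
    ∀ U : Set X, t.IsOpen U → U.Nonempty → ∃ G ∈ γ, G ⊆ U

/-- `γ` is a π-net for the subspace `A` of `(X, t)`. -/
def PiNetFor (t : TopologicalSpace X) (γ : Set (Set X)) (A : Set X) : Prop :=
  (∀ G ∈ γ, G.Nonempty) ∧
    ∀ U : Set X, t.IsOpen U → (U ∩ A).Nonempty → ∃ G ∈ γ, G ⊆ U ∩ A

/-- `V` is a π-base Souslin scheme on `(X, t)`:
an open scheme such that `{V_b : a ⊑ b}` is a π-net for the subspace `V_a`, for each `a`. -/
def PiBaseScheme (t : TopologicalSpace X) (V : List ℕ → Set X) : Prop :=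
  OpenScheme t V ∧ ∀ a, PiNetFor t {S | ∃ b, a <+: b ∧ S = V b} (V a)

/-- `(X, t)` is a π-space. -/
def PiSpace (t : TopologicalSpace X) : Prop :=
  ∃ V : List ℕ → Set X, OpenScheme t V ∧ Partitions V Set.univ ∧ StrictBranches V ∧
    PiBase t {S | ∃ a, S = V a}

/-- `(X, t)` is zero-dimensional: it has a base consisting of clopen sets. -/
def ZeroDimT (t : TopologicalSpace X) : Prop :=
  ∀ U : Set X, t.IsOpen U → ∀ x ∈ U, ∃ C : Set X, t.IsOpen C ∧ @IsClosed _ t C ∧ x ∈ C ∧ C ⊆ U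

/-- `branches_V(x) = {q ∈ ω^ω : x ∈ fruit_q(V)}`. -/
def branches (V : List ℕ → Set X) (x : X) : Set (ℕ → ℕ) := {q | x ∈ fruit V q}

/-- `f` is a selector on `V`: a surjection of `ω^ω` onto `flesh(V)` such that each fiber
`f⁻¹(x)` is a dense subset of the subspace `branches_V(x)` of the Baire space. -/
def IsSelector (V : List ℕ → Set X) (f : (ℕ → ℕ) → X) : Prop :=
  (∀ p, f p ∈ flesh V) ∧ (∀ x ∈ flesh V, ∃ p, f p = x) ∧
    ∀ x ∈ flesh V, f ⁻¹' {x} ⊆ branches V x ∧ branches V x ⊆ closure (f ⁻¹' {x})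

/-- The topology `σ_{t,f}` on `ω^ω` generated by the subbase
`{f⁻¹[U] : U ∈ t} ∪ {S_a : a ∈ ω^{<ω}}`. -/
def sigmaTop (t : TopologicalSpace X) (f : (ℕ → ℕ) → X) : TopologicalSpace (ℕ → ℕ) :=
  TopologicalSpace.generateFrom
    ({S | ∃ U : Set X, t.IsOpen U ∧ S = f ⁻¹' U} ∪ {S | ∃ a : List ℕ, S = stdS a})

end scheme

/-- `(ω^ω, t)` is a standard π-space: the family `τ_N \ {∅}` of nonempty open sets of the
Baire space is a π-base for `(ω^ω, t)`. -/
def StandardPiSpace (t : TopologicalSpace (ℕ → ℕ)) : Prop :=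
  (∀ U : Set (ℕ → ℕ), IsOpen U → U.Nonempty → t.IsOpen U) ∧
    ∀ U : Set (ℕ → ℕ), t.IsOpen U → U.Nonempty → ∃ G : Set (ℕ → ℕ), IsOpen G ∧ G.Nonempty ∧ G ⊆ U

/-!
A basic `σ_{τ,f}`-neighbourhood of `p` has the form `S_{p↾n} ∩ f⁻¹[W]` with `W` a
`τ`-neighbourhood of `f p`. Since `p →_{V,τ} f p`, some level `m ≥ n` and some `k` satisfy
`Ṽ^k_{p↾m} ⊆ W`. Every `q ∈ S̃^k_{p↾m}` extends `p↾m` by a digit `q m ≥ k`, and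
`f q ∈ fruit_q(V) ⊆ V_{(p↾m)⌢(q m)}`, so `f q ∈ W`; hence `S̃^k_{p↾m}` lies inside the
neighbourhood, which is (L6). The remaining properties of a Lusin π-base hold for `S` in any
topology containing the sets `S_a`.
-/

lemma pre_length (p : ℕ → ℕ) (n : ℕ) : (pre p n).length = n := List.length_ofFn

lemma pre_succ (p : ℕ → ℕ) (n : ℕ) : pre p (n + 1) = pre p n ++ [p n] := by
  simp only [pre, List.ofFn_succ', List.concat_eq_append, Fin.val_castSucc, Fin.val_last]

lemma pre_eq_pre_iff {p q : ℕ → ℕ} {n : ℕ} : pre q n = pre p n ↔ ∀ i < n, q i = p i := by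
  simp only [pre, List.ofFn_inj, funext_iff, Fin.forall_iff]

lemma mem_stdS_pre {p q : ℕ → ℕ} {n : ℕ} : q ∈ stdS (pre p n) ↔ pre q n = pre p n := by
  simp only [stdS, IsPre, mem_ofPred_eq, pre_length, eq_comm]

lemma stdS_pre_subset_of_le {p : ℕ → ℕ} {n m : ℕ} (h : n ≤ m) : stdS (pre p m) ⊆ stdS (pre p n) := by
  intro q hq
  rw [mem_stdS_pre, pre_eq_pre_iff] at hq ⊢
  exact fun i hi => hq i (hi.trans_le h)

lemma isPre_append {a : List ℕ} {n : ℕ} {q : ℕ → ℕ} :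
    IsPre (a ++ [n]) q ↔ IsPre a q ∧ q a.length = n := by
  unfold IsPre
  rw [List.length_append, List.length_singleton, pre_succ]
  constructor
  · intro h
    obtain ⟨h1, h2⟩ := List.append_inj' h rfl
    exact ⟨h1, by simpa using h2.symm⟩
  · rintro ⟨h1, rfl⟩
    rw [← h1]

lemma mem_shootSet_stdS {a : List ℕ} {k : ℕ} {q : ℕ → ℕ} :
    q ∈ shootSet stdS a k ↔ q ∈ stdS a ∧ k ≤ q a.length := by
  simp only [shootSet, mem_iUnion, stdS, mem_ofPred_eq, isPre_append, exists_prop]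
  constructor
  · rintro ⟨j, hj, hq, rfl⟩
    exact ⟨hq, hj⟩
  · rintro ⟨hq, hk⟩
    exact ⟨_, hk, hq, rfl⟩

lemma partitions_stdS : Partitions stdS univ := by
  refine ⟨⟨?_, fun a => ?_⟩, fun a n m hnm => ?_⟩
  · exact eq_univ_of_forall fun p => by simp [stdS, IsPre, pre]
  · ext p
    simp only [stdS, mem_ofPred_eq, mem_iUnion, isPre_append, exists_and_left, exists_eq',
      and_true]
  · refine eq_empty_of_forall_notMem fun p ⟨hn, hm⟩ => hnm ?_
    exact (isPre_append.mp hn).2.symm.trans (isPre_append.mp hm).2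

lemma fruit_stdS (q : ℕ → ℕ) : fruit stdS q = {q} := by
  ext p
  simp only [fruit, mem_iInter, mem_stdS_pre, pre_eq_pre_iff, mem_singleton_iff]
  exact ⟨fun h => funext fun i => h (i + 1) i i.lt_succ_self, fun h n i _ => h ▸ rfl⟩

lemma strictBranches_stdS : StrictBranches stdS := fun q => ⟨q, fruit_stdS q⟩

section sigmaTop

variable {X : Type*} {t : TopologicalSpace X} {V : List ℕ → Set X} {f : (ℕ → ℕ) → X}

lemma openScheme_stdS_sigmaTop : OpenScheme (sigmaTop t f) stdS :=
  fun a => TopologicalSpace.GenerateOpen.basic _ (Or.inr ⟨a, rfl⟩)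

lemma exists_stdS_inter_preimage_subset_of_isOpen {U : Set (ℕ → ℕ)}
    (hU : (sigmaTop t f).IsOpen U) {p : ℕ → ℕ} (hp : p ∈ U) :
    ∃ n W, t.IsOpen W ∧ f p ∈ W ∧ stdS (pre p n) ∩ f ⁻¹' W ⊆ U := by
  induction hU generalizing p with
  | basic S hS =>
    rcases hS with ⟨W, hW, rfl⟩ | ⟨a, rfl⟩
    · exact ⟨0, W, hW, hp, inter_subset_right⟩
    · refine ⟨a.length, univ, t.isOpen_univ, trivial, fun q hq => ?_⟩
      rw [← show a = pre p a.length from hp] at hq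
      exact hq.1
  | univ => exact ⟨0, univ, t.isOpen_univ, trivial, subset_univ _⟩
  | inter U₁ U₂ _ _ ih₁ ih₂ =>
    obtain ⟨n₁, W₁, hW₁, hp₁, hsub₁⟩ := ih₁ hp.1
    obtain ⟨n₂, W₂, hW₂, hp₂, hsub₂⟩ := ih₂ hp.2
    refine ⟨max n₁ n₂, W₁ ∩ W₂, t.isOpen_inter _ _ hW₁ hW₂, ⟨hp₁, hp₂⟩,
      fun q ⟨hq, hqW₁, hqW₂⟩ => ?_⟩
    exact ⟨hsub₁ ⟨stdS_pre_subset_of_le (le_max_left _ _) hq, hqW₁⟩,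
      hsub₂ ⟨stdS_pre_subset_of_le (le_max_right _ _) hq, hqW₂⟩⟩
  | sUnion S _ ih =>
    obtain ⟨U, hUS, hpU⟩ := hp
    obtain ⟨n, W, hW, hpW, hsub⟩ := ih U hUS hpU
    exact ⟨n, W, hW, hpW, hsub.trans (subset_sUnion_of_mem hUS)⟩

lemma IsSelector.apply_mem_fruit (hf : IsSelector V f) (q : ℕ → ℕ) : f q ∈ fruit V q :=
  (hf.2.2 (f q) (hf.1 q)).1 rfl

lemma shootSet_stdS_subset_preimage (hf : ∀ q, f q ∈ fruit V q) (a : List ℕ) (k : ℕ) :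
    shootSet stdS a k ⊆ f ⁻¹' shootSet V a k := by
  intro q hq
  obtain ⟨hqa, hk⟩ := mem_shootSet_stdS.mp hq
  have hfq : f q ∈ V (pre q (a.length + 1)) := mem_iInter.mp (hf q) _
  rw [pre_succ, ← show a = pre q a.length from hqa] at hfq
  exact mem_iUnion₂.mpr ⟨_, hk, hfq⟩

lemma exists_shootSet_stdS_subset (hf : ∀ q, f q ∈ fruit V q)
    (harr : ∀ p, ArrowPt t V p (f p)) {U : Set (ℕ → ℕ)} (hU : (sigmaTop t f).IsOpen U)
    {p : ℕ → ℕ} (hp : p ∈ U) : ∃ a k, p ∈ stdS a ∧ shootSet stdS a k ⊆ U := by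
  obtain ⟨n, W, hW, hpW, hsub⟩ := exists_stdS_inter_preimage_subset_of_isOpen hU hp
  obtain ⟨L, hL, hLW⟩ := harr p W hW hpW
  obtain ⟨m, hmL, hnm⟩ := hL.exists_gt n
  obtain ⟨_, ⟨k, rfl⟩, hkW⟩ := hLW m hmL
  refine ⟨pre p m, k, mem_stdS_pre.mpr rfl, fun q hq => hsub ⟨?_, ?_⟩⟩
  · exact stdS_pre_subset_of_le hnm.le (mem_shootSet_stdS.mp hq).1
  · exact hkW (shootSet_stdS_subset_preimage hf _ _ hq)

end sigmaTop

theorem statement9_general {X : Type*} [tX : TopologicalSpace X] (V : List ℕ → Set X)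
    (f : (ℕ → ℕ) → X) (hsel : IsSelector V f)
    (harr : ∀ x : X, ∀ p : ℕ → ℕ, f p = x → ArrowPt tX V p x) :
    LusinPiBase (sigmaTop tX f) stdS :=
  ⟨openScheme_stdS_sigmaTop, partitions_stdS, strictBranches_stdS, fun _ _ hU hp =>
    exists_shootSet_stdS_subset hsel.apply_mem_fruit (fun p => harr _ p rfl) hU hp⟩

/-- If `V` is an open complete Souslin scheme on `(X,τ)` covering `X` and `f` is a selector on
`V` with `p →_{V,τ} x` for all `x` and all `p ∈ f⁻¹(x)`, then the standard Lusin scheme `S`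
is a Lusin π-base for `(ω^ω, σ_{τ,f})`. -/
theorem statement9 {X : Type*} [tX : TopologicalSpace X] (V : List ℕ → Set X)
    (hopen : OpenScheme tX V) (hcomp : CompleteScheme V) (hcov : Covers V Set.univ)
    (f : (ℕ → ℕ) → X) (hsel : IsSelector V f)
    (harr : ∀ x : X, ∀ p : ℕ → ℕ, f p = x → ArrowPt tX V p x) :
    LusinPiBase (sigmaTop tX f) stdS :=
  statement9_general (tX := tX) V f hsel harr
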